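/- If a first-round price p1 in (0,1] admits a sophisticated-focused implementation at sophistication level μ, then p1 does not admit any naive-focused implementation at μ. -/

import Mathlib

/-!
Clearing the normalisations of the posteriors, the second-round revenue curves become
`μ · (revenue from values above t) + (1 - μ) · (revenue from values above p1)` after an accept,
and the same with "below" after a reject. Suppose both implementations exist, with thresholds
`ts` (accept price `aS ≥ ts`) and `tn` (accept price `aN < tn`). On the accept side, `aN`
maximises a strictly concave function on `[p1, tn]`, and if `tn ≤ ts` the optimality of `aS`
would lift that function at `aS` to at least its value at `aN`, contradicting strict concavity;
so `ts < tn`. On the reject side, indifference puts a sophisticated reject price in `[p1, ts)`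
and a naive one below `p1`; as the reject revenue has increasing differences in threshold and
price, revealed preference gives `tn ≤ ts`.
-/

open MeasureTheory Set Filter

noncomputable section

namespace RepeatedSales

/-- `F` is the CDF of an atomless distribution fully supported on `[0,1]`:
continuous, strictly increasing on `[0,1]`, with `F 0 = 0` and `F 1 = 1`. -/
structure NiceCDF (F : ℝ → ℝ) : Prop where
  cont : Continuous F
  mono : StrictMonoOn F (Icc (0:ℝ) 1)
  zero : F 0 = 0
  one : F 1 = 1

/-- The (price-posting) revenue curve `R(p) = p (1 - F p)`. -/
def Rcurve (F : ℝ → ℝ) (p : ℝ) : ℝ := p * (1 - F p)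

/-- The CDF truncated at `x` from above: `F_{≤x}(v) = min (F v / F x) 1`. -/
def Fle (F : ℝ → ℝ) (x v : ℝ) : ℝ := min (F v / F x) 1

/-- The CDF truncated at `x` from below: `F_{≥x}(v) = max ((F v - F x)/(1 - F x)) 0`. -/
def Fge (F : ℝ → ℝ) (x v : ℝ) : ℝ := max ((F v - F x) / (1 - F x)) 0

/-- Revenue curve of the truncated distribution `F_{≤x}`. -/
def Rle (F : ℝ → ℝ) (x p : ℝ) : ℝ := p * (1 - Fle F x p)

/-- Revenue curve of the truncated distribution `F_{≥x}`. -/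
def Rge (F : ℝ → ℝ) (x p : ℝ) : ℝ := p * (1 - Fge F x p)

/-- Posterior probability of sophistication after a reject. -/
def muR (F : ℝ → ℝ) (μ p1 t : ℝ) : ℝ := μ * F t / (μ * F t + (1 - μ) * F p1)

/-- Posterior probability of sophistication after an accept. -/
def muA (F : ℝ → ℝ) (μ p1 t : ℝ) : ℝ :=
  μ * (1 - F t) / (μ * (1 - F t) + (1 - μ) * (1 - F p1))

/-- The seller's posterior CDF over values after a first-round reject. -/
def FrejCDF (F : ℝ → ℝ) (μ p1 t v : ℝ) : ℝ :=
  muR F μ p1 t * Fle F t v + (1 - muR F μ p1 t) * Fle F p1 v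

/-- The seller's posterior CDF over values after a first-round accept. -/
def FaccCDF (F : ℝ → ℝ) (μ p1 t v : ℝ) : ℝ :=
  muA F μ p1 t * Fge F t v + (1 - muA F μ p1 t) * Fge F p1 v

/-- The second-round revenue curve conditioned on a reject. -/
def Rrej (F : ℝ → ℝ) (μ p1 t p : ℝ) : ℝ := p * (1 - FrejCDF F μ p1 t p)

/-- The second-round revenue curve conditioned on an accept. -/
def Racc (F : ℝ → ℝ) (μ p1 t p : ℝ) : ℝ := p * (1 - FaccCDF F μ p1 t p)

/-- The (topological) support of a measure on `ℝ`: points all of whose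
neighborhoods have positive measure. -/
def msupp (ν : Measure ℝ) : Set ℝ := {x | ∀ U ∈ nhds x, ν U ≠ 0}

/-- A continuation `(p1, p2R, p2A, t)` at sophistication level `μ`:
`p2R`, `p2A` are (random) prices, i.e. probability measures supported in `[0,1]`,
every point of the support of `p2R` (resp. `p2A`) maximizes the reject (resp. accept)
revenue curve over `[0,1]`, and the threshold indifference equation holds.
The denominators defining the posteriors are assumed positive. -/
structure Continuation (F : ℝ → ℝ) (μ p1 : ℝ) (p2R p2A : Measure ℝ) (t : ℝ) : Prop where
  denR_pos : 0 < μ * F t + (1 - μ) * F p1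
  denA_pos : 0 < μ * (1 - F t) + (1 - μ) * (1 - F p1)
  probR : IsProbabilityMeasure p2R
  probA : IsProbabilityMeasure p2A
  suppR01 : msupp p2R ⊆ Icc 0 1
  suppA01 : msupp p2A ⊆ Icc 0 1
  optR : ∀ p ∈ msupp p2R, IsMaxOn (Rrej F μ p1 t) (Icc 0 1) p
  optA : ∀ p ∈ msupp p2A, IsMaxOn (Racc F μ p1 t) (Icc 0 1) p
  indiff : t - p1 + (∫ x, max (t - x) 0 ∂p2A) = ∫ x, max (t - x) 0 ∂p2R

/-- A continuation with deterministic accept price `p2A ≥ t`. -/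
def SophFocused (p2A : Measure ℝ) (t : ℝ) : Prop :=
  ∃ a : ℝ, p2A = Measure.dirac a ∧ t ≤ a

/-- A continuation with deterministic accept price `p2A < t`. -/
def NaiveFocused (p2A : Measure ℝ) (t : ℝ) : Prop :=
  ∃ a : ℝ, p2A = Measure.dirac a ∧ a < t

/-- The seller's expected revenue of a continuation at sophistication `μ`. -/
def sellerRev (F : ℝ → ℝ) (μ p1 t : ℝ) (p2R p2A : Measure ℝ) : ℝ :=
  μ * (p1 * (1 - F t) + (∫ a, (if a ≤ t then a * (1 - F a) else 0) ∂p2A)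
      + ∫ r, r * (F t - F r) ∂p2R)
  + (1 - μ) * (p1 * (1 - F p1) + (∫ a, a * (1 - F a) ∂p2A)
      + ∫ r, (if r ≤ p1 then r * (F p1 - F r) else 0) ∂p2R)

lemma msupp_eq_support (ν : Measure ℝ) : msupp ν = ν.support := by
  ext x
  simp [msupp, Measure.mem_support_iff_forall, pos_iff_ne_zero]

lemma measure_compl_msupp (ν : Measure ℝ) : ν (msupp ν)ᶜ = 0 := by
  rw [msupp_eq_support]
  exact Measure.measure_compl_support

lemma mem_msupp_dirac (a : ℝ) : a ∈ msupp (Measure.dirac a) := fun U hU => by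
  simp [Measure.dirac_apply_of_mem (mem_of_mem_nhds hU)]

lemma integrable_of_msupp_subset {ν : Measure ℝ} [IsFiniteMeasure ν] {K : Set ℝ}
    (hK : IsCompact K) (hν : msupp ν ⊆ K) {g : ℝ → ℝ} (hg : Continuous g) :
    Integrable g ν := by
  have hae : ∀ᵐ x ∂ν, x ∈ K :=
    measure_mono_null (compl_subset_compl.2 hν) (measure_compl_msupp ν)
  rw [← Measure.restrict_eq_self_of_ae_mem hae]
  exact hg.continuousOn.integrableOn_compact hK

lemma exists_mem_msupp_le_integral {ν : Measure ℝ} [IsProbabilityMeasure ν] {g : ℝ → ℝ}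
    (hg : Integrable g ν) : ∃ x ∈ msupp ν, g x ≤ ∫ y, g y ∂ν := by
  obtain ⟨x, hx, hle⟩ := exists_notMem_null_le_integral hg (measure_compl_msupp ν)
  exact ⟨x, not_notMem.1 hx, hle⟩

lemma exists_mem_msupp_integral_le {ν : Measure ℝ} [IsProbabilityMeasure ν] {g : ℝ → ℝ}
    (hg : Integrable g ν) : ∃ x ∈ msupp ν, ∫ y, g y ∂ν ≤ g x := by
  obtain ⟨x, hx, hle⟩ := exists_notMem_null_integral_le hg (measure_compl_msupp ν)
  exact ⟨x, not_notMem.1 hx, hle⟩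

lemma _root_.StrictConcaveOn.const_mul {E : Type*} [AddCommMonoid E] [Module ℝ E] {s : Set E}
    {f : E → ℝ} {c : ℝ} (hc : 0 < c) (hf : StrictConcaveOn ℝ s f) :
    StrictConcaveOn ℝ s (fun x => c * f x) :=
  ⟨hf.1, fun _ hx _ hy hxy _ _ ha hb hab => by
    simpa only [smul_eq_mul, mul_add, mul_left_comm c] using
      mul_lt_mul_of_pos_left (hf.2 hx hy hxy ha hb hab) hc⟩

section Revenue

variable {F : ℝ → ℝ} {μ p1 t x p : ℝ}

lemma NiceCDF.le (hF : NiceCDF F) {y : ℝ} (hx : x ∈ Icc (0:ℝ) 1) (hy : y ∈ Icc (0:ℝ) 1)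
    (hxy : x ≤ y) : F x ≤ F y :=
  hF.mono.monotoneOn hx hy hxy

lemma NiceCDF.nonneg (hF : NiceCDF F) (hx : x ∈ Icc (0:ℝ) 1) : 0 ≤ F x :=
  hF.zero ▸ hF.le ⟨le_rfl, zero_le_one⟩ hx hx.1

lemma NiceCDF.le_one (hF : NiceCDF F) (hx : x ∈ Icc (0:ℝ) 1) : F x ≤ 1 :=
  hF.one ▸ hF.le hx ⟨zero_le_one, le_rfl⟩ hx.2

/-- `revAbove F x p = (1 - F x) * Rge F x p` and `revBelow F x p = F x * Rle F x p`: the revenues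
at price `p` from the buyers with values above, resp. below, `x`, without renormalisation. -/
def revAbove (F : ℝ → ℝ) (x p : ℝ) : ℝ := p * (1 - max (F p) (F x))

def revBelow (F : ℝ → ℝ) (x p : ℝ) : ℝ := p * max (F x - F p) 0

def accRev (F : ℝ → ℝ) (μ p1 t p : ℝ) : ℝ :=
  μ * revAbove F t p + (1 - μ) * revAbove F p1 p

def rejRev (F : ℝ → ℝ) (μ p1 t p : ℝ) : ℝ :=
  μ * revBelow F t p + (1 - μ) * revBelow F p1 p

lemma one_sub_mul_Rge (hx : F x ≤ 1) (hp : F p ≤ 1) :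
    (1 - F x) * Rge F x p = revAbove F x p := by
  unfold Rge Fge revAbove
  rcases hx.eq_or_lt with hx | hx
  · simp [hx, max_eq_right hp]
  have hx' : 0 < 1 - F x := sub_pos.2 hx
  rcases le_total (F p) (F x) with h | h
  · rw [max_eq_right (div_nonpos_of_nonpos_of_nonneg (by linarith) hx'.le), max_eq_right h]
    ring
  · rw [max_eq_left (div_nonneg (by linarith) hx'.le), max_eq_left h]
    field_simp
    ring

lemma mul_Rle (hx : 0 ≤ F x) (hp : 0 ≤ F p) : F x * Rle F x p = revBelow F x p := by
  unfold Rle Fle revBelow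
  rcases hx.eq_or_lt with hx | hx
  · simp [← hx, hp]
  rcases le_total (F p) (F x) with h | h
  · rw [min_eq_left ((div_le_one hx).2 h), max_eq_left (by linarith)]
    field_simp
  · rw [min_eq_right ((one_le_div hx).2 h), max_eq_right (by linarith)]
    ring

lemma mul_Racc (hden : μ * (1 - F t) + (1 - μ) * (1 - F p1) ≠ 0) (ht : F t ≤ 1)
    (hp1 : F p1 ≤ 1) (hp : F p ≤ 1) :
    (μ * (1 - F t) + (1 - μ) * (1 - F p1)) * Racc F μ p1 t p = accRev F μ p1 t p := by
  rw [accRev, ← one_sub_mul_Rge ht hp, ← one_sub_mul_Rge hp1 hp]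
  simp only [Racc, FaccCDF, muA, Rge]
  field_simp
  ring

lemma mul_Rrej (hden : μ * F t + (1 - μ) * F p1 ≠ 0) (ht : 0 ≤ F t) (hp1 : 0 ≤ F p1)
    (hp : 0 ≤ F p) :
    (μ * F t + (1 - μ) * F p1) * Rrej F μ p1 t p = rejRev F μ p1 t p := by
  rw [rejRev, ← mul_Rle ht hp, ← mul_Rle hp1 hp]
  simp only [Rrej, FrejCDF, muR, Rle]
  field_simp
  ring

lemma revAbove_of_le (h : F p ≤ F x) : revAbove F x p = p * (1 - F x) := by
  rw [revAbove, max_eq_right h]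

lemma revAbove_of_ge (h : F x ≤ F p) : revAbove F x p = Rcurve F p := by
  rw [revAbove, max_eq_left h, Rcurve]

lemma revBelow_of_le (h : F p ≤ F x) : revBelow F x p = p * (F x - F p) := by
  rw [revBelow, max_eq_left (sub_nonneg.2 h)]

lemma revBelow_of_ge (h : F x ≤ F p) : revBelow F x p = 0 := by
  rw [revBelow, max_eq_right (sub_nonpos.2 h), mul_zero]

lemma accRev_of_le (ht : F p ≤ F t) (hp1 : F p ≤ F p1) :
    accRev F μ p1 t p = p * (μ * (1 - F t) + (1 - μ) * (1 - F p1)) := by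
  rw [accRev, revAbove_of_le ht, revAbove_of_le hp1]
  ring

lemma accRev_of_mem (ht : F p ≤ F t) (hp1 : F p1 ≤ F p) :
    accRev F μ p1 t p = μ * (1 - F t) * p + (1 - μ) * Rcurve F p := by
  rw [accRev, revAbove_of_le ht, revAbove_of_ge hp1]
  ring

lemma accRev_of_ge (ht : F t ≤ F p) (hp1 : F p1 ≤ F p) : accRev F μ p1 t p = Rcurve F p := by
  rw [accRev, revAbove_of_ge ht, revAbove_of_ge hp1]
  ring

lemma rejRev_of_le (ht : F p ≤ F t) (hp1 : F p ≤ F p1) :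
    rejRev F μ p1 t p = p * (μ * F t + (1 - μ) * F p1 - F p) := by
  rw [rejRev, revBelow_of_le ht, revBelow_of_le hp1]
  ring

lemma rejRev_of_ge (hp1 : F p1 ≤ F p) : rejRev F μ p1 t p = μ * revBelow F t p := by
  rw [rejRev, revBelow_of_ge hp1, mul_zero, add_zero]

lemma rejRev_sub_rejRev {s : ℝ} (hs : F p ≤ F s) (hst : F s ≤ F t) :
    rejRev F μ p1 t p - rejRev F μ p1 s p = μ * p * (F t - F s) := by
  rw [rejRev, rejRev, revBelow_of_le hs, revBelow_of_le (hs.trans hst)]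
  ring

end Revenue

namespace Continuation

variable {F : ℝ → ℝ} {μ p1 t a : ℝ} {p2R p2A : Measure ℝ}

lemma isMaxOn_accRev (hF : NiceCDF F) (hc : Continuation F μ p1 p2R p2A t)
    (ht : t ∈ Icc (0:ℝ) 1) (hp1 : p1 ∈ Icc (0:ℝ) 1) (ha : a ∈ msupp p2A) :
    IsMaxOn (accRev F μ p1 t) (Icc 0 1) a := by
  refine isMaxOn_iff.2 fun p hp => ?_
  have hscale := fun q (hq : q ∈ Icc (0:ℝ) 1) =>
    mul_Racc (μ := μ) hc.denA_pos.ne' (hF.le_one ht) (hF.le_one hp1) (hF.le_one hq)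
  rw [← hscale p hp, ← hscale a (hc.suppA01 ha)]
  exact mul_le_mul_of_nonneg_left (isMaxOn_iff.1 (hc.optA a ha) p hp) hc.denA_pos.le

lemma isMaxOn_rejRev (hF : NiceCDF F) (hc : Continuation F μ p1 p2R p2A t)
    (ht : t ∈ Icc (0:ℝ) 1) (hp1 : p1 ∈ Icc (0:ℝ) 1) (hr : a ∈ msupp p2R) :
    IsMaxOn (rejRev F μ p1 t) (Icc 0 1) a := by
  refine isMaxOn_iff.2 fun p hp => ?_
  have hscale := fun q (hq : q ∈ Icc (0:ℝ) 1) =>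
    mul_Rrej (μ := μ) hc.denR_pos.ne' (hF.nonneg ht) (hF.nonneg hp1) (hF.nonneg hq)
  rw [← hscale p hp, ← hscale a (hc.suppR01 hr)]
  exact mul_le_mul_of_nonneg_left (isMaxOn_iff.1 (hc.optR a hr) p hp) hc.denR_pos.le

lemma integrable_max_sub (hc : Continuation F μ p1 p2R p2A t) (s : ℝ) :
    Integrable (fun x => max (s - x) 0) p2R :=
  have := hc.probR
  integrable_of_msupp_subset isCompact_Icc hc.suppR01 (by fun_prop)

/-- Below `min t p1` the accept revenue is linear with positive slope. -/
lemma le_of_naive (hF : NiceCDF F) (hc : Continuation F μ p1 p2R (Measure.dirac a) t)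
    (ht : t ∈ Icc (0:ℝ) 1) (hp1 : p1 ∈ Icc (0:ℝ) 1) (hat : a < t) : p1 ≤ a := by
  have ha := hc.suppA01 (mem_msupp_dirac a)
  by_contra! hap
  have hm : min t p1 ∈ Icc (0:ℝ) 1 := ⟨le_min ht.1 hp1.1, (min_le_right _ _).trans hp1.2⟩
  have hlin : ∀ p ∈ Icc (0:ℝ) 1, p ≤ min t p1 →
      accRev F μ p1 t p = p * (μ * (1 - F t) + (1 - μ) * (1 - F p1)) := fun p hp hpm =>
    accRev_of_le (hF.le hp ht (hpm.trans (min_le_left _ _)))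
      (hF.le hp hp1 (hpm.trans (min_le_right _ _)))
  have hmax := isMaxOn_iff.1 (hc.isMaxOn_accRev hF ht hp1 (mem_msupp_dirac a)) _ hm
  rw [hlin _ hm le_rfl, hlin a ha (lt_min hat hap).le] at hmax
  nlinarith [hc.denA_pos, lt_min hat hap]

lemma ne_one_of_naive (hF : NiceCDF F) (hc : Continuation F μ p1 p2R (Measure.dirac a) t)
    (ht : t ∈ Icc (0:ℝ) 1) (hp1 : p1 ∈ Icc (0:ℝ) 1) (hat : a < t) : μ ≠ 1 := by
  rintro rfl
  have ha := hc.suppA01 (mem_msupp_dirac a)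
  have hmax := isMaxOn_iff.1 (hc.isMaxOn_accRev hF ht hp1 (mem_msupp_dirac a)) t ht
  simp only [accRev, sub_self, zero_mul, add_zero, one_mul] at hmax
  rw [revAbove_of_le le_rfl, revAbove_of_le (hF.le ha ht hat.le)] at hmax
  nlinarith [hc.denA_pos]

lemma exists_mem_msupp_lt_of_naive (hc : Continuation F μ p1 p2R (Measure.dirac a) t)
    (hpa : p1 ≤ a) (hat : a < t) : ∃ r ∈ msupp p2R, r < p1 := by
  have := hc.probR
  have hind := hc.indiff
  rw [integral_dirac, max_eq_left (by linarith)] at hind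
  obtain ⟨r, hr, hle⟩ := exists_mem_msupp_integral_le (hc.integrable_max_sub t)
  refine ⟨r, hr, ?_⟩
  by_contra! hpr
  have : max (t - r) 0 ≤ t - p1 := max_le (by linarith) (by linarith)
  linarith

/-- The reject price must earn positive revenue (compare with the price `p1 / 2`), which above
`p1` only sophisticated buyers with values below `t` provide. -/
lemma pos_and_exists_of_soph (hF : NiceCDF F) (hp1 : p1 ∈ Ioc (0:ℝ) 1) (hμ : 0 ≤ μ)
    (hc : Continuation F μ p1 p2R (Measure.dirac a) t) (ht : t ∈ Icc (0:ℝ) 1) (hta : t ≤ a) :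
    0 < μ ∧ ∃ r ∈ msupp p2R, p1 ≤ r ∧ r < t := by
  have := hc.probR
  have hp1I : p1 ∈ Icc (0:ℝ) 1 := Ioc_subset_Icc_self hp1
  have hind := hc.indiff
  rw [integral_dirac, max_eq_right (by linarith), add_zero] at hind
  have hp1t : p1 ≤ t := by
    linarith [integral_nonneg (μ := p2R) (f := fun x => max (t - x) 0) fun x => le_max_right _ _]
  obtain ⟨r, hr, hle⟩ := exists_mem_msupp_le_integral (hc.integrable_max_sub t)
  have hp1r : p1 ≤ r := by linarith [le_max_left (t - r) 0]
  have hrI := hc.suppR01 hr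
  have hhalf : p1 / 2 ∈ Icc (0:ℝ) 1 := ⟨by linarith [hp1.1], by linarith [hp1.2]⟩
  have hFhalf : F (p1 / 2) < F p1 := hF.mono hhalf hp1I (by linarith [hp1.1])
  have hpos : 0 < rejRev F μ p1 t (p1 / 2) := by
    rw [rejRev_of_le (hFhalf.le.trans (hF.le hp1I ht hp1t)) hFhalf.le]
    refine mul_pos (by linarith [hp1.1]) ?_
    nlinarith [mul_nonneg hμ (sub_nonneg.2 (hF.le hp1I ht hp1t))]
  have hmax := isMaxOn_iff.1 (hc.isMaxOn_rejRev hF ht hp1I hr) _ hhalf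
  rw [rejRev_of_ge (hF.le hp1I hrI hp1r)] at hmax
  refine ⟨hμ.lt_of_ne ?_, r, hr, hp1r, ?_⟩
  · rintro rfl
    linarith [zero_mul (revBelow F t r)]
  · by_contra! htr
    rw [revBelow_of_ge (hF.le ht hrI htr), mul_zero] at hmax
    linarith

end Continuation

lemma lt_of_isMaxOn_accRev {F : ℝ → ℝ} (hF : NiceCDF F)
    (hcon : StrictConcaveOn ℝ (Icc (0:ℝ) 1) (Rcurve F)) {μ p1 tn ts aN aS : ℝ}
    (hμ : μ ∈ Ico (0:ℝ) 1) (hp1 : p1 ∈ Icc (0:ℝ) 1) (htn : tn ∈ Icc (0:ℝ) 1)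
    (hts : ts ∈ Icc (0:ℝ) 1) (haN : aN ∈ Icc (0:ℝ) 1) (haS : aS ∈ Icc (0:ℝ) 1)
    (hp1aN : p1 ≤ aN) (haNtn : aN < tn) (htsaS : ts ≤ aS)
    (hN : IsMaxOn (accRev F μ p1 tn) (Icc 0 1) aN)
    (hS : IsMaxOn (accRev F μ p1 ts) (Icc 0 1) aS) :
    ts < tn := by
  by_contra! htnts
  set ψ : ℝ → ℝ := fun p => μ * (1 - F tn) * p + (1 - μ) * Rcurve F p
  have hslope : 0 ≤ μ * (1 - F tn) := mul_nonneg hμ.1 (sub_nonneg.2 (hF.le_one htn))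
  have hψ : StrictConcaveOn ℝ (Icc 0 1) ψ :=
    ((concaveOn_id (convex_Icc 0 1)).smul hslope).add_strictConcaveOn
      (hcon.const_mul (sub_pos.2 hμ.2))
  have hψ_eq : ∀ p ∈ Icc (0:ℝ) 1, p1 ≤ p → p ≤ tn → accRev F μ p1 tn p = ψ p :=
    fun p hp h1 h2 => accRev_of_mem (hF.le hp htn h2) (hF.le hp1 hp h1)
  have hFtn_ts := hF.le htn hts htnts
  have hFts_aS := hF.le hts haS htsaS
  have hψS : ψ aN ≤ ψ aS := by
    have hmax := isMaxOn_iff.1 hS aN haN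
    rw [accRev_of_mem (hF.le haN hts (by linarith)) (hF.le hp1 haN hp1aN),
      accRev_of_ge hFts_aS (hF.le hp1 haS (by linarith))] at hmax
    have hRaS : Rcurve F aS ≤ aS * (1 - F ts) :=
      mul_le_mul_of_nonneg_left (by linarith) haS.1
    simp only [ψ]
    nlinarith [mul_le_mul_of_nonneg_left hRaS hμ.1,
      mul_nonneg (mul_nonneg hμ.1 (by linarith : (0:ℝ) ≤ aS - aN)) (sub_nonneg.2 hFtn_ts)]
  have hwI : (aN + tn) / 2 ∈ Icc (0:ℝ) 1 := ⟨by linarith [haN.1], by linarith [htn.2]⟩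
  have hw : (aN + tn) / 2 ∈ openSegment ℝ aN aS := by
    rw [openSegment_eq_Ioo (by linarith)]
    constructor <;> linarith
  have hlt : ψ aN < ψ ((aN + tn) / 2) :=
    min_eq_left hψS ▸ hψ.lt_on_openSegment haN haS (by linarith) hw
  have hle := isMaxOn_iff.1 hN _ hwI
  rw [hψ_eq _ hwI (by linarith) (by linarith), hψ_eq aN haN hp1aN haNtn.le] at hle
  linarith

lemma le_of_isMaxOn_rejRev {F : ℝ → ℝ} (hF : NiceCDF F) {μ p1 s t l h : ℝ} (hμ : 0 < μ)
    (hs : s ∈ Icc (0:ℝ) 1) (ht : t ∈ Icc (0:ℝ) 1) (hl : l ∈ Icc (0:ℝ) 1)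
    (hh : h ∈ Icc (0:ℝ) 1)
    (hlh : l < h) (hhs : h ≤ s) (hS : IsMaxOn (rejRev F μ p1 s) (Icc 0 1) h)
    (hT : IsMaxOn (rejRev F μ p1 t) (Icc 0 1) l) : t ≤ s := by
  by_contra! hst
  have hFst : F s < F t := hF.mono hs ht hst
  have hdl := rejRev_sub_rejRev (μ := μ) (p1 := p1) (hF.le hl hs (by linarith)) hFst.le
  have hdh := rejRev_sub_rejRev (μ := μ) (p1 := p1) (hF.le hh hs hhs) hFst.le
  have h1 := isMaxOn_iff.1 hS l hl
  have h2 := isMaxOn_iff.1 hT h hh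
  nlinarith [mul_pos hμ (sub_pos.2 hFst)]

/-- **Lemma: no dual implementation.** If a first-round price
`p1 ∈ (0,1]` admits a sophisticated-focused implementation at sophistication
level `μ`, then `p1` does not admit any naive-focused implementation at `μ`. -/
theorem soph_focused_excludes_naive_focused
    (F : ℝ → ℝ) (hF : NiceCDF F)
    (hcon : StrictConcaveOn ℝ (Icc (0:ℝ) 1) (Rcurve F))
    (μ p1 : ℝ) (hμ : μ ∈ Icc (0:ℝ) 1) (hp1 : p1 ∈ Ioc (0:ℝ) 1)
    (hsoph : ∃ (t : ℝ) (p2R p2A : Measure ℝ), t ∈ Icc (0:ℝ) 1 ∧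
      Continuation F μ p1 p2R p2A t ∧ SophFocused p2A t) :
    ¬ ∃ (t : ℝ) (p2R p2A : Measure ℝ), t ∈ Icc (0:ℝ) 1 ∧
      Continuation F μ p1 p2R p2A t ∧ NaiveFocused p2A t := by
  obtain ⟨ts, PR, _, hts, cS, aS, rfl, htsaS⟩ := hsoph
  rintro ⟨tn, QR, _, htn, cN, aN, rfl, haNtn⟩
  have hp1I : p1 ∈ Icc (0:ℝ) 1 := Ioc_subset_Icc_self hp1
  have hp1aN : p1 ≤ aN := cN.le_of_naive hF htn hp1I haNtn
  have hμ1 : μ < 1 := hμ.2.lt_of_ne (cN.ne_one_of_naive hF htn hp1I haNtn)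
  obtain ⟨hμ0, hS, hSmem, hp1hS, hSts⟩ := cS.pos_and_exists_of_soph hF hp1 hμ.1 hts htsaS
  obtain ⟨lN, hlNmem, hlNp1⟩ := cN.exists_mem_msupp_lt_of_naive hp1aN haNtn
  have htstn : ts < tn := lt_of_isMaxOn_accRev hF hcon ⟨hμ.1, hμ1⟩ hp1I htn hts
    (cN.suppA01 (mem_msupp_dirac aN)) (cS.suppA01 (mem_msupp_dirac aS)) hp1aN haNtn htsaS
    (cN.isMaxOn_accRev hF htn hp1I (mem_msupp_dirac aN))
    (cS.isMaxOn_accRev hF hts hp1I (mem_msupp_dirac aS))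
  have htnts : tn ≤ ts := le_of_isMaxOn_rejRev hF hμ0 hts htn (cN.suppR01 hlNmem)
    (cS.suppR01 hSmem) (hlNp1.trans_le hp1hS) hSts.le
    (cS.isMaxOn_rejRev hF hts hp1I hSmem) (cN.isMaxOn_rejRev hF htn hp1I hlNmem)
  exact htstn.not_ge htnts

end RepeatedSales
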